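/- arXiv:2501.05123 — 2 statements merged into one kernel-verified Lean document; each statement's English description precedes it below -/
import Mathlib

section
/- Let n ≥ 3 and let D be a nonempty set of integers, each of which occurs as a finite directed distance between some pair of vertices of an oriented cycle C⃗_n, with min(D) ≥ 2. If C⃗_n is D-antimagic, then C⃗_n is unidirectional. -/
open scoped Classical

/-- There is a directed walk of length `k` from `u` to `v` in the digraph with arc relation `A`. -/
def WalkLen {V : Type*} (A : V → V → Prop) : ℕ → V → V → Prop
  | 0, u, v => u = v
  | k + 1, u, v => ∃ w, A u w ∧ WalkLen A k w v

/-- The directed distance from `u` to `v` is exactly `k`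
(i.e. `k` is the length of a shortest directed path from `u` to `v`). -/
def HasDist {V : Type*} (A : V → V → Prop) (u v : V) (k : ℕ) : Prop :=
  WalkLen A k u v ∧ ∀ m < k, ¬ WalkLen A m u v

/-- `y` belongs to the `D`-neighborhood of `v`: the distance from `v` to `y` lies in `D`. -/
def InDNbhd {V : Type*} (A : V → V → Prop) (D : Set ℕ) (v y : V) : Prop :=
  ∃ k ∈ D, HasDist A v y k

/-- The `D`-weight of `v` under the labeling `f`: the sum of labels of the `D`-neighbors. -/
noncomputable def dWeight {V : Type*} [Fintype V] (A : V → V → Prop) (D : Set ℕ)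
    (f : V → ℕ) (v : V) : ℕ :=
  ∑ y : V, if InDNbhd A D v y then f y else 0

/-- The digraph `(V, A)` is `D`-antimagic: some bijective labeling of the vertices by
`1, …, |V|` gives pairwise distinct `D`-weights. -/
def DAntimagic (V : Type*) [Fintype V] (A : V → V → Prop) (D : Set ℕ) : Prop :=
  ∃ f : V ≃ Fin (Fintype.card V),
    Function.Injective fun v => dWeight A D (fun y => (f y : ℕ) + 1) v

/-- The orientation of the cycle `C_n` determined by `σ`: the edge between vertex `i` and
vertex `(i+1) mod n` is directed `i → i+1` when `σ i = true`, and `i+1 → i` otherwise. -/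
def cycleArc (n : ℕ) (σ : Fin n → Bool) (u v : Fin n) : Prop :=
  (σ u = true ∧ (v : ℕ) = ((u : ℕ) + 1) % n) ∨
  (σ v = false ∧ (u : ℕ) = ((v : ℕ) + 1) % n)

/-- The arc relation of the unidirectional oriented cycle `C⃗_n`: arcs `i → (i+1) mod n`. -/
def uniArc (n : ℕ) (u v : Fin n) : Prop :=
  (v : ℕ) = ((u : ℕ) + 1) % n

/-- An orientation of `C_n` is unidirectional if all edges are directed the same way around. -/
def Unidirectional (n : ℕ) (σ : Fin n → Bool) : Prop :=
  (∀ i, σ i = true) ∨ (∀ i, σ i = false)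

/-- A sink: a vertex of out-degree 0. -/
def IsSink {V : Type*} (A : V → V → Prop) (u : V) : Prop :=
  ∀ v, ¬ A u v

/-- A source: a vertex of in-degree 0. -/
def IsSource {V : Type*} (A : V → V → Prop) (u : V) : Prop :=
  ∀ v, ¬ A v u

/-- A digraph is Θ-oriented if it has exactly one sink and exactly one source, and
they are adjacent (so the arc between them goes from the source to the sink). -/
def ThetaOriented {V : Type*} (A : V → V → Prop) : Prop :=
  ∃ s t, IsSink A s ∧ IsSource A t ∧ (∀ u, IsSink A u → u = s) ∧
    (∀ u, IsSource A u → u = t) ∧ A t s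

/-- The arc relation of the Θ-oriented cycle on `Fin n`:
arcs `i → i+1` for `0 ≤ i ≤ n-2`, together with the arc `0 → n-1`. -/
def thetaArc (n : ℕ) (u v : Fin n) : Prop :=
  ((v : ℕ) = (u : ℕ) + 1) ∨ ((u : ℕ) = 0 ∧ (v : ℕ) = n - 1)

/-- The arc relation of a disjoint union of `c` oriented cycles, the `j`-th component having
`len j` vertices and arc relation `A j`. -/
def unionArc (c : ℕ) (len : Fin c → ℕ)
    (A : ∀ j, Fin (len j) → Fin (len j) → Prop)
    (u v : Σ j, Fin (len j)) : Prop :=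
  ∃ h : u.1 = v.1, A v.1 (Fin.cast (congrArg len h) u.2) v.2

open Fin.NatCast Fin.CommRing

section Aux

lemma walkLen_two {V : Type*} (A : V → V → Prop) {k : ℕ} (hk : 2 ≤ k) {u v : V}
    (h : WalkLen A k u v) : ∃ w w', A u w ∧ A w w' := by
  obtain ⟨m, rfl⟩ : ∃ m, k = m + 2 := ⟨k - 2, by omega⟩
  obtain ⟨w, hw, h2⟩ := h
  obtain ⟨w', hw', _⟩ := h2
  exact ⟨w, w', hw, hw'⟩

lemma fin_eq_add_one_iff {n : ℕ} [NeZero n] (hn : 3 ≤ n) (x y : Fin n) :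
    (y : ℕ) = ((x : ℕ) + 1) % n ↔ y = x + 1 := by
  have h1 : ((x + 1 : Fin n) : ℕ) = ((x : ℕ) + 1) % n := by
    rw [Fin.val_add, Fin.val_one' n, Nat.mod_eq_of_lt (show 1 < n by omega)]
  constructor
  · intro h; exact Fin.ext (by rw [h1, ← h])
  · intro h; rw [h, h1]

lemma arc_iff {n : ℕ} [NeZero n] (hn : 3 ≤ n) (σ : Fin n → Bool) (u v : Fin n) :
    cycleArc n σ u v ↔ (σ u = true ∧ v = u + 1) ∨ (σ v = false ∧ u = v + 1) := by
  unfold cycleArc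
  rw [fin_eq_add_one_iff hn, fin_eq_add_one_iff hn]

lemma isSink_of {n : ℕ} [NeZero n] (hn : 3 ≤ n) (σ : Fin n → Bool) (i : Fin n)
    (h0 : σ i = false) (h1 : σ (i - 1) = true) : IsSink (cycleArc n σ) i := by
  intro v hv
  rcases (arc_iff hn σ i v).1 hv with ⟨h, _⟩ | ⟨h, he⟩
  · rw [h0] at h; exact Bool.false_ne_true h
  · have hvi : v = i - 1 := eq_sub_of_add_eq he.symm
    rw [hvi, h1] at h; simp at h

lemma first_false {n : ℕ} [NeZero n] (hn : 3 ≤ n) (σ : Fin n → Bool) (a : Fin n) (ha : σ a = true)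
    (m : ℕ) (hm : σ (a + (m : Fin n)) = false) :
    ∃ k, 1 ≤ k ∧ k ≤ m ∧ σ (a + (k : Fin n)) = false ∧ σ (a + (k : Fin n) - 1) = true := by
  have hne : ∃ k : ℕ, σ (a + (k : Fin n)) = false := ⟨m, hm⟩
  set k := Nat.find hne with hk
  have hkF : σ (a + (k : Fin n)) = false := Nat.find_spec hne
  have hkm : k ≤ m := Nat.find_min' hne hm
  have hk1 : 1 ≤ k := by
    rcases Nat.eq_zero_or_pos k with h | h
    · exfalso
      rw [h] at hkF
      simp only [Nat.cast_zero, add_zero] at hkF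
      rw [ha] at hkF; simp at hkF
    · exact h
  refine ⟨k, hk1, hkm, hkF, ?_⟩
  have hprev : ¬ σ (a + ((k - 1 : ℕ) : Fin n)) = false := Nat.find_min hne (by omega)
  have hcast : (k : Fin n) = ((k - 1 : ℕ) : Fin n) + 1 := by
    conv_lhs => rw [show k = (k - 1) + 1 by omega]
    push_cast
    ring
  have heq : a + (k : Fin n) - 1 = a + ((k - 1 : ℕ) : Fin n) := by
    rw [hcast]; ring
  rw [heq]
  cases hx : σ (a + ((k - 1 : ℕ) : Fin n)) with
  | false => exact absurd hx hprev
  | true => rfl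

lemma not_antimagic_of_two_bad {V : Type*} [Fintype V] (A : V → V → Prop) (D : Set ℕ)
    (hmin : 2 ≤ sInf D) {u v : V} (huv : u ≠ v)
    (hu : ∀ w, A u w → IsSink A w) (hv : ∀ w, A v w → IsSink A w) :
    ¬ DAntimagic V A D := by
  rintro ⟨f, hf⟩
  have key : ∀ x : V, (∀ w, A x w → IsSink A w) →
      dWeight A D (fun y => (f y : ℕ) + 1) x = 0 := by
    intro x hx
    apply Finset.sum_eq_zero
    intro y _
    rw [if_neg]
    rintro ⟨k, hkD, hwalk, _⟩
    have hk2 : 2 ≤ k := hmin.trans (Nat.sInf_le hkD)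
    obtain ⟨w, w', h1, h2⟩ := walkLen_two A hk2 hwalk
    exact hx w h1 w' h2
  exact huv (hf (show dWeight A D (fun y => (f y : ℕ) + 1) u =
    dWeight A D (fun y => (f y : ℕ) + 1) v by rw [key u hu, key v hv]))

end Aux

/-- If `D` is a distance set of an oriented cycle `C⃗_n` with `min D ≥ 2`
and `C⃗_n` is `D`-antimagic, then `C⃗_n` is unidirectional. -/
theorem antimagic_minGeTwo_unidirectional (n : ℕ) (hn : 3 ≤ n) (σ : Fin n → Bool)
    (D : Set ℕ) (hD : D.Nonempty)
    (hocc : ∀ d ∈ D, ∃ u v : Fin n, HasDist (cycleArc n σ) u v d)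
    (hmin : 2 ≤ sInf D)
    (hanti : DAntimagic (Fin n) (cycleArc n σ) D) :
    Unidirectional n σ := by
  haveI : NeZero n := ⟨by omega⟩
  by_contra hcon
  rw [Unidirectional, not_or] at hcon
  obtain ⟨h1, h2⟩ := hcon
  push_neg at h1 h2
  obtain ⟨b, hb⟩ := h1
  obtain ⟨a, ha⟩ := h2
  simp only [Bool.not_eq_true] at hb
  simp only [Bool.not_eq_false] at ha
  -- find a sink i : σ i = false, σ (i-1) = true
  have hmem : σ (a + (((b - a).val : ℕ) : Fin n)) = false := by
    rw [Fin.cast_val_eq_self (b - a), add_sub_cancel]; exact hb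
  obtain ⟨k₀, -, -, hiF, hi1T⟩ := first_false hn σ a ha (b - a).val hmem
  set i : Fin n := a + ((k₀ : ℕ) : Fin n) with hi
  clear_value i
  have hsinki : IsSink (cycleArc n σ) i := isSink_of hn σ i hiF hi1T
  have badi : ∀ w, cycleArc n σ i w → IsSink (cycleArc n σ) w := fun w hw =>
    absurd hw (hsinki w)
  by_cases h3 : σ (i + 1) = false
  · -- i and i+1 both have all out-neighbors sinks
    have badi1 : ∀ w, cycleArc n σ (i + 1) w → IsSink (cycleArc n σ) w := by
      intro w hw
      rcases (arc_iff hn σ (i + 1) w).1 hw with ⟨h, _⟩ | ⟨_, he⟩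
      · rw [h3] at h; exact absurd h (Bool.false_ne_true)
      · have : w = i := by
          have := eq_sub_of_add_eq he.symm
          rw [this]; ring_nf
        rw [this]; exact hsinki
    have hne : i ≠ i + 1 := by
      intro h
      have h10 : (1 : Fin n) = 0 := by
        have := h.symm
        rwa [add_eq_left] at this
      have : (1 : Fin n).val = (0 : Fin n).val := by rw [h10]
      rw [Fin.val_one' n, Fin.val_zero, Nat.mod_eq_of_lt (show 1 < n by omega)] at this
      exact one_ne_zero this
    exact not_antimagic_of_two_bad (cycleArc n σ) D hmin hne badi badi1 hanti
  · simp only [Bool.not_eq_false] at h3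
    by_cases h4 : σ (i - 2) = true
    · -- i-1 and i both have all out-neighbors sinks
      have badim : ∀ w, cycleArc n σ (i - 1) w → IsSink (cycleArc n σ) w := by
        intro w hw
        rcases (arc_iff hn σ (i - 1) w).1 hw with ⟨_, he⟩ | ⟨h, he⟩
        · have : w = i := by rw [he]; ring
          rw [this]; exact hsinki
        · have : w = i - 2 := by
            have := eq_sub_of_add_eq he.symm
            rw [this]; ring
          rw [this, h4] at h; simp at h
      have hne : i - 1 ≠ i := by
        intro h
        have h10 : (1 : Fin n) = 0 := by
          have : i - 1 + 1 = i + 1 := by rw [h]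
          have h2 : i + 1 - 1 = i - 1 + 1 - 1 := by rw [h]
          have : (1 : Fin n) = 0 := by
            have hh : i = i - 1 := h.symm
            calc (1 : Fin n) = i - (i - 1) := by ring
              _ = i - i := by rw [← hh]
              _ = 0 := by ring
          exact this
        have : (1 : Fin n).val = (0 : Fin n).val := by rw [h10]
        rw [Fin.val_one' n, Fin.val_zero, Nat.mod_eq_of_lt (show 1 < n by omega)] at this
        exact one_ne_zero this
      exact not_antimagic_of_two_bad (cycleArc n σ) D hmin hne badim badi hanti
    · simp only [Bool.not_eq_true] at h4
      -- second sink between i+1 and i-2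
      have hcast3 : ((n - 3 : ℕ) : Fin n) = -3 := by
        rw [Nat.cast_sub hn, Fin.natCast_self]
        push_cast
        ring
      have hmem2 : σ (i + 1 + ((n - 3 : ℕ) : Fin n)) = false := by
        have : i + 1 + ((n - 3 : ℕ) : Fin n) = i - 2 := by rw [hcast3]; ring
        rw [this]; exact h4
      obtain ⟨k, hk1, hkm, hkF, hkT⟩ := first_false hn σ (i + 1) h3 (n - 3) hmem2
      set j : Fin n := i + 1 + ((k : ℕ) : Fin n) with hj
      have hsinkj : IsSink (cycleArc n σ) j := isSink_of hn σ j hkF hkT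
      have badj : ∀ w, cycleArc n σ j w → IsSink (cycleArc n σ) w := fun w hw =>
        absurd hw (hsinkj w)
      have hne : j ≠ i := by
        intro h
        have hk0 : ((k + 1 : ℕ) : Fin n) = 0 := by
          push_cast
          have : ((k : ℕ) : Fin n) + 1 = j - i := by rw [hj]; ring
          rw [this, h]; ring
        have hdvd : n ∣ k + 1 := Fin.natCast_eq_zero.mp hk0
        have := Nat.le_of_dvd (by omega) hdvd
        omega
      exact not_antimagic_of_two_bad (cycleArc n σ) D hmin hne badj badi hanti
end

section
/- For every n ≥ 4 with n ≠ 6, the unidirectional oriented cycle C⃗_n is {0,3}-antimagic. -/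
open scoped Classical

/-! The `{0,3}`-weight of `v` is `f v + f (v + 3)`. Translation by `3` splits `ℤ/n` into
`g = gcd n 3` cycles of length `m = n / g`, and `m ≥ 3` exactly when `n ≥ 4`, `n ≠ 6`. Label the
`i`-th point of the `j`-th cycle by `m * j + b i`, where `b` is a permutation of `Fin m` whose
cyclically consecutive sums are pairwise distinct. The weights on the `j`-th cycle then lie in
`[2mj, 2mj + 2m)` and are distinct within the cycle. -/

section

open Fin.NatCast Fin.CommRing

lemma Fin.natCast_eq_natCast_iff {n : ℕ} [NeZero n] {a b : ℕ} :
    (a : Fin n) = b ↔ a ≡ b [MOD n] := by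
  simp [Fin.ext_iff, Nat.ModEq]

section UniArc

variable {n : ℕ} [NeZero n]

lemma uniArc_iff (u v : Fin n) : uniArc n u v ↔ v = u + 1 := by
  simp [uniArc, Fin.ext_iff, Fin.val_add]

lemma walkLen_uniArc_iff (k : ℕ) (u v : Fin n) :
    WalkLen (uniArc n) k u v ↔ v = u + (k : Fin n) := by
  induction k generalizing u with
  | zero => simp [WalkLen, eq_comm]
  | succ k ih =>
    simp only [WalkLen, uniArc_iff, ih, exists_eq_left, Nat.cast_succ]
    ring_nf

lemma hasDist_uniArc_iff (u v : Fin n) (k : ℕ) :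
    HasDist (uniArc n) u v k ↔ k < n ∧ v = u + (k : Fin n) := by
  simp only [HasDist, walkLen_uniArc_iff]
  constructor
  · rintro ⟨rfl, hmin⟩
    refine ⟨?_, rfl⟩
    by_contra! hk
    exact hmin (k % n) ((Nat.mod_lt _ (NeZero.pos n)).trans_le hk) (by simp [Fin.ext_iff])
  · rintro ⟨hk, rfl⟩
    refine ⟨rfl, fun m hm h => hm.ne' ?_⟩
    rw [add_right_inj, Fin.natCast_eq_natCast_iff] at h
    exact h.eq_of_lt_of_lt hk (hm.trans hk)

lemma dWeight_uniArc_pair_zero {d : ℕ} (hd : 0 < d) (hdn : d < n) (f : Fin n → ℕ) (v : Fin n) :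
    dWeight (uniArc n) {0, d} f v = f v + f (v + (d : Fin n)) := by
  have hne : v ≠ v + (d : Fin n) := by
    simpa [Fin.ext_iff, Nat.mod_eq_of_lt hdn] using hd.ne'
  have hnbhd : ∀ y,
      InDNbhd (uniArc n) {0, d} v y ↔ y ∈ ({v, v + (d : Fin n)} : Finset (Fin n)) := by
    intro y
    simp [InDNbhd, hasDist_uniArc_iff, hdn, NeZero.pos n, eq_comm]
  simp only [dWeight, hnbhd, Finset.sum_ite_mem, Finset.univ_inter, Finset.sum_pair hne]

end UniArc

lemma val_finRotate {m : ℕ} (i : Fin m) :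
    (finRotate m i : ℕ) = if (i : ℕ) + 1 = m then 0 else (i : ℕ) + 1 := by
  obtain _ | m := m
  · exact i.elim0
  · rw [coe_finRotate]
    simp [Fin.ext_iff]

/-- For odd `m` the identity works; for even `m`, swap the two largest labels. -/
lemma exists_perm_injective_add_finRotate {m : ℕ} (hm : 3 ≤ m) :
    ∃ b : Equiv.Perm (Fin m), Function.Injective fun i => (b i : ℕ) + b (finRotate m i) := by
  refine ⟨Equiv.swap ⟨if m % 2 = 0 then m - 2 else m - 1, by split_ifs <;> omega⟩
    ⟨m - 1, by omega⟩, fun i i' h => ?_⟩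
  simp only [Equiv.swap_apply_def, Fin.ext_iff, apply_ite Fin.val, val_finRotate] at h ⊢
  split_ifs at h <;> omega

/-- The witness is `(j, i) ↦ d * i + j`. -/
lemma exists_equiv_finRotate_eq_add {n : ℕ} [NeZero n] (d : ℕ) :
    ∃ ψ : Fin (n.gcd d) × Fin (n / n.gcd d) ≃ Fin n,
      ∀ j i, ψ (j, finRotate _ i) = ψ (j, i) + (d : Fin n) := by
  set g := n.gcd d
  set m := n / g
  have hgn : g ∣ n := Nat.gcd_dvd_left n d
  have hgd : g ∣ d := Nat.gcd_dvd_right n d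
  let ψ : Fin g × Fin m → Fin n := fun p => ((d * p.2 + p.1 : ℕ) : Fin n)
  have hψ : Function.Injective ψ := by
    rintro ⟨j, i⟩ ⟨j', i'⟩ h
    have hmod : d * i + j ≡ d * i' + j' [MOD n] := Fin.natCast_eq_natCast_iff.mp h
    have hdi : d * i ≡ d * i' [MOD g] :=
      (Nat.modEq_zero_iff_dvd.mpr (hgd.mul_right _)).trans
        (Nat.modEq_zero_iff_dvd.mpr (hgd.mul_right _)).symm
    have hj : j = j' :=
      Fin.ext ((hdi.add_left_cancel (hmod.of_dvd hgn)).eq_of_lt_of_lt j.2 j'.2)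
    subst hj
    have hi : (i : ℕ) ≡ i' [MOD m] :=
      (hmod.add_right_cancel' _).cancel_left_div_gcd (NeZero.pos n)
    rw [Fin.ext (hi.eq_of_lt_of_lt i.2 i'.2)]
  have hcard : Fintype.card (Fin g × Fin m) = Fintype.card (Fin n) := by
    simp [m, Nat.mul_div_cancel' hgn]
  refine ⟨Equiv.ofBijective ψ ((Fintype.bijective_iff_injective_and_card ψ).mpr ⟨hψ, hcard⟩),
    fun j i => ?_⟩
  simp only [Equiv.ofBijective_apply, ψ, ← Nat.cast_add, Fin.natCast_eq_natCast_iff,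
    val_finRotate]
  split_ifs with hi
  · have hdm : d * m ≡ 0 [MOD n] := Nat.modEq_zero_iff_dvd.mpr ⟨d / g, by
      rw [mul_comm n, ← Nat.mul_div_cancel' hgn, ← mul_assoc, Nat.div_mul_cancel hgd]⟩
    calc d * 0 + j = 0 + j := by rw [mul_zero]
      _ ≡ d * m + j [MOD n] := (hdm.add_right j).symm
      _ = d * i + j + d := by rw [add_right_comm, ← mul_add_one, hi]
  · rw [mul_add_one, add_right_comm]

lemma exists_equiv_injective_add_of_finRotate_conj {V : Type*} [Fintype V] {k m : ℕ}
    (hm : 3 ≤ m) (σ : V → V) (ψ : Fin k × Fin m ≃ V)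
    (hψ : ∀ j i, ψ (j, finRotate m i) = σ (ψ (j, i))) :
    ∃ f : V ≃ Fin (Fintype.card V), Function.Injective fun v => (f v : ℕ) + f (σ v) := by
  obtain ⟨b, hb⟩ := exists_perm_injective_add_finRotate hm
  have hcard : k * m = Fintype.card V := by simp [← Fintype.card_congr ψ]
  let f : V ≃ Fin (Fintype.card V) :=
    ψ.symm.trans (((Equiv.refl _).prodCongr b).trans (finProdFinEquiv.trans (finCongr hcard)))
  have hf : ∀ j i, (f (ψ (j, i)) : ℕ) + f (σ (ψ (j, i))) =
      ((b i : ℕ) + b (finRotate m i)) + 2 * m * j := by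
    intro j i
    simp only [f, ← hψ, Equiv.trans_apply, Equiv.symm_apply_apply, Equiv.prodCongr_apply,
      Prod.map, Equiv.refl_apply, finCongr_apply, Fin.val_cast, finProdFinEquiv_apply_val]
    ring
  have hlt : ∀ i, (b i : ℕ) + b (finRotate m i) < 2 * m := fun i => by omega
  refine ⟨f, fun v v' h => ?_⟩
  obtain ⟨⟨j, i⟩, rfl⟩ := ψ.surjective v
  obtain ⟨⟨j', i'⟩, rfl⟩ := ψ.surjective v'
  simp only [hf] at h
  have h2m : 0 < 2 * m := by omega
  obtain ⟨hj, hi⟩ := (Nat.div_mod_unique h2m).mpr ⟨h, hlt i⟩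
  obtain ⟨hj', hi'⟩ := (Nat.div_mod_unique h2m).mpr ⟨rfl, hlt i'⟩
  rw [Fin.ext (hj.symm.trans hj'), hb (hi.symm.trans hi')]

theorem dAntimagic_uniArc_pair_zero {n d : ℕ} (hdn : d < n) (hm : 3 ≤ n / n.gcd d) :
    DAntimagic (Fin n) (uniArc n) {0, d} := by
  have : NeZero n := ⟨by omega⟩
  have hd : 0 < d := Nat.pos_of_ne_zero fun h => by simp [h, Nat.div_self (NeZero.pos n)] at hm
  obtain ⟨ψ, hψ⟩ := exists_equiv_finRotate_eq_add (n := n) d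
  obtain ⟨f, hf⟩ := exists_equiv_injective_add_of_finRotate_conj hm (· + (d : Fin n)) ψ hψ
  refine ⟨f, fun v w h => hf ?_⟩
  simp only [dWeight_uniArc_pair_zero hd hdn] at h ⊢
  omega

end

/-- For every `n ≥ 4` with `n ≠ 6`, the unidirectional `C⃗_n` is
`{0,3}`-antimagic. -/
theorem uni_antimagic_zero_three (n : ℕ) (hn : 4 ≤ n) (hne : n ≠ 6) :
    DAntimagic (Fin n) (uniArc n) {0, 3} := by
  refine dAntimagic_uniArc_pair_zero (by omega) ?_
  rcases (Nat.dvd_prime Nat.prime_three).mp (Nat.gcd_dvd_right n 3) with h | h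
  · rw [h]
    omega
  · have : 3 ∣ n := h ▸ Nat.gcd_dvd_left n 3
    rw [h]
    omega
end
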